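/- Let E be a real inner product space, φ : E → ℝ a convex function, and g : E → E a map such that φ has gradient g z at every point z ∈ E (HasGradientAt φ (g z) z for all z). Then for every k, every z : Fin k → E, and every permutation π of Fin k, ∑_{i} ‖g (z i) − z i‖² ≤ ∑_{i} ‖g (z i) − z (π i)‖². In other words, the identity pairing (z i, g (z i)) is an optimal coupling, minimizing the sum of squared distances between the points g(z_1),…,g(z_k) and the points z_1,…,z_k over all permutations. -/

import Mathlib

/-!
The gradient of a convex function is cyclically monotone: summing the supporting-hyperplane
inequalities `φ (z i) + ⟪∇φ (z i), z (π i) - z i⟫ ≤ φ (z (π i))` over `i`, the values of `φ`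
cancel. Expanding the squares, the two sums of squared distances differ by exactly twice this
cyclic sum, because `∑ ‖z (π i)‖² = ∑ ‖z i‖²`.
-/

theorem ConvexOn.add_fderiv_sub_le {E : Type*} [NormedAddCommGroup E] [NormedSpace ℝ E]
    {s : Set E} {f : E → ℝ} {f' : E →L[ℝ] ℝ} {x y : E} (hf : ConvexOn ℝ s f)
    (hx : x ∈ s) (hy : y ∈ s) (hf' : HasFDerivAt f f' x) :
    f x + f' (y - x) ≤ f y := by
  set ℓ : ℝ →ᵃ[ℝ] E := AffineMap.lineMap x y
  have hline : ConvexOn ℝ (ℓ ⁻¹' s) (f ∘ ℓ) := hf.comp_affineMap ℓ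
  have hderiv : HasDerivAt (f ∘ ℓ) (f' (y - x)) 0 :=
    (by simpa [ℓ] using hf' : HasFDerivAt f f' (ℓ 0)).comp_hasDerivAt 0
      AffineMap.hasDerivAt_lineMap
  have hslope := hline.le_slope_of_hasDerivAt (by simpa [ℓ] using hx) (by simpa [ℓ] using hy)
    zero_lt_one hderiv
  simp only [slope_def_field, Function.comp_apply, ℓ, AffineMap.lineMap_apply_zero,
    AffineMap.lineMap_apply_one, sub_zero, div_one] at hslope
  linarith

theorem ConvexOn.add_inner_gradient_sub_le {E : Type*} [NormedAddCommGroup E]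
    [InnerProductSpace ℝ E] [CompleteSpace E] {s : Set E} {f : E → ℝ} {v x y : E}
    (hf : ConvexOn ℝ s f) (hx : x ∈ s) (hy : y ∈ s) (hv : HasGradientAt f v x) :
    f x + inner ℝ v (y - x) ≤ f y :=
  hf.add_fderiv_sub_le hx hy hv.hasFDerivAt

theorem ConvexOn.sum_inner_gradient_perm_sub_nonpos {E ι : Type*} [NormedAddCommGroup E]
    [InnerProductSpace ℝ E] [CompleteSpace E] [Fintype ι] {f : E → ℝ} {g : E → E}
    (hf : ConvexOn ℝ Set.univ f) (hg : ∀ z, HasGradientAt f (g z) z) (z : ι → E)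
    (σ : Equiv.Perm ι) :
    ∑ i, inner ℝ (g (z i)) (z (σ i) - z i) ≤ 0 := by
  have hsupport : ∑ i, (f (z i) + inner ℝ (g (z i)) (z (σ i) - z i)) ≤ ∑ i, f (z (σ i)) :=
    Finset.sum_le_sum fun i _ ↦
      hf.add_inner_gradient_sub_le (Set.mem_univ _) (Set.mem_univ _) (hg (z i))
  rw [Finset.sum_add_distrib, Equiv.sum_comp σ (fun i ↦ f (z i))] at hsupport
  linarith

theorem sum_norm_sub_perm_sq {E ι : Type*} [SeminormedAddCommGroup E] [InnerProductSpace ℝ E]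
    [Fintype ι] (a b : ι → E) (σ : Equiv.Perm ι) :
    ∑ i, ‖a i - b (σ i)‖ ^ 2 = ∑ i, ‖a i - b i‖ ^ 2 - 2 * ∑ i, inner ℝ (a i) (b (σ i) - b i) := by
  have hnorm : ∑ i, ‖b (σ i)‖ ^ 2 = ∑ i, ‖b i‖ ^ 2 := Equiv.sum_comp σ (fun i ↦ ‖b i‖ ^ 2)
  simp only [norm_sub_sq_real, inner_sub_right, Finset.sum_add_distrib, Finset.sum_sub_distrib,
    ← Finset.mul_sum, hnorm]
  ring

/-- Claim (zZ) in the proof of Proposition 2.2(i): the identity pairing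
`(z i, g (z i))` with `g` the gradient of a convex function is an optimal coupling,
minimizing the sum of squared distances over all permutations. -/
theorem gradient_convex_identity_optimal_coupling
    {E : Type*} [NormedAddCommGroup E] [InnerProductSpace ℝ E] [CompleteSpace E]
    (φ : E → ℝ) (g : E → E)
    (hφ : ConvexOn ℝ Set.univ φ)
    (hg : ∀ z : E, HasGradientAt φ (g z) z) :
    ∀ (k : ℕ) (z : Fin k → E) (π : Equiv.Perm (Fin k)),
      (∑ i, ‖g (z i) - z i‖ ^ 2) ≤ ∑ i, ‖g (z i) - z (π i)‖ ^ 2 := by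
  intro k z π
  have hexpand := sum_norm_sub_perm_sq (fun i ↦ g (z i)) z π
  have hcyclic := hφ.sum_inner_gradient_perm_sub_nonpos hg z π
  linarith
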